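/- Consider a φ-smooth fair cost-sharing game with n players and m ≥ 2 resources, where the fixed resource costs {a_r}_{r ∈ R} are independent φ-smooth random variables. Fix ε > 0, and let T be the supremum, over all starting profiles and all sequences of consecutive (1+ε)-improving moves, of the length of the sequence. Then E[T] ≤ φ·(1 + 1/ε)·n·m²·H_n·(m·ln(n+1) + ln m) + 1, where H_n = Σ_{j=1}^n 1/j. -/

import Mathlib

open MeasureTheory ProbabilityTheory

/-- The load of resource `r` under strategy profile `s`: the number of players using `r`. -/
def load {n m : ℕ} (s : Fin n → Finset (Fin m)) (r : Fin m) : ℕ :=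
  (Finset.univ.filter fun i => r ∈ s i).card

/-- The cost of player `i` under profile `s`, with resource costs `cost r ℓ`. -/
def playerCost {n m : ℕ} (cost : Fin m → ℕ → ℝ) (s : Fin n → Finset (Fin m)) (i : Fin n) : ℝ :=
  ∑ r ∈ s i, cost r (load s r)

/-- Rosenthal's potential `Φ(s) = Σ_{r ∈ R} Σ_{j=1}^{ℓ_r(s)} c_r(j)`. -/
def potential {n m : ℕ} (cost : Fin m → ℕ → ℝ) (s : Fin n → Finset (Fin m)) : ℝ :=
  ∑ r : Fin m, ∑ j ∈ Finset.Icc 1 (load s r), cost r j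

/-- A strategy profile is valid when each player plays a strategy from their strategy set. -/
def ValidProfile {n m : ℕ} (strat : Fin n → Set (Finset (Fin m)))
    (s : Fin n → Finset (Fin m)) : Prop :=
  ∀ i, s i ∈ strat i

/-- An `(1+ε)`-improving move from `s` to `s'`: some player `i` deviates to a strategy
`si' ∈ S_i` with `(1+ε)·C_i(s') < C_i(s)`. -/
def ImprovingMove {n m : ℕ} (strat : Fin n → Set (Finset (Fin m))) (cost : Fin m → ℕ → ℝ)
    (ε : ℝ) (s s' : Fin n → Finset (Fin m)) : Prop :=
  ∃ i : Fin n, ∃ si' ∈ strat i, s' = Function.update s i si' ∧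
    (1 + ε) * playerCost cost s' i < playerCost cost s i

/-- The fair cost-sharing resource cost `c_r(ℓ) = a_r / ℓ`. -/
noncomputable def shareCost {m : ℕ} (a : Fin m → ℝ) : Fin m → ℕ → ℝ :=
  fun r ℓ => a r / ℓ

/-- The `n`-th harmonic number `H_n = Σ_{j=1}^n 1/j`. -/
noncomputable def harmonicNumber (n : ℕ) : ℝ := ∑ j ∈ Finset.Icc 1 n, (1 : ℝ) / j

/-- A `φ`-smooth random variable: a real-valued random variable taking values in `[0,1]`,
absolutely continuous with density bounded above by `φ`. -/
def PhiSmooth {Ω : Type*} [MeasurableSpace Ω] (P : Measure Ω) (φ : ℝ) (X : Ω → ℝ) : Prop :=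
  Measurable X ∧ ∃ f : ℝ → ENNReal,
    Measure.map X P = volume.withDensity f ∧
    (∀ x, f x ≤ ENNReal.ofReal φ) ∧ ∀ x, x ∉ Set.Icc (0 : ℝ) 1 → f x = 0

/-- The supremum, over all starting profiles and all sequences of consecutive
`(1+ε)`-improving moves, of the length of the sequence. -/
noncomputable def maxImprovingSeqLen {n m : ℕ} (strat : Fin n → Set (Finset (Fin m)))
    (cost : Fin m → ℕ → ℝ) (ε : ℝ) : ℕ :=
  sSup {T : ℕ | ∃ s : ℕ → Fin n → Finset (Fin m),
    (∀ k ≤ T, ValidProfile strat (s k)) ∧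
    ∀ k < T, ImprovingMove strat cost ε (s k) (s (k + 1))}


section AuxLemmas
variable {n m : ℕ}

lemma load_le_n (s : Fin n → Finset (Fin m)) (r : Fin m) : load s r ≤ n := by
  classical
  simpa [load] using (Finset.card_filter_le Finset.univ (fun i => r ∈ s i))

lemma one_le_load {s : Fin n → Finset (Fin m)} {r : Fin m} {i : Fin n} (h : r ∈ s i) :
    1 ≤ load s r := by
  classical
  exact Finset.card_pos.mpr ⟨i, by simp [h]⟩

lemma harmonic_nonneg (k : ℕ) : 0 ≤ harmonicNumber k := by
  unfold harmonicNumber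
  exact Finset.sum_nonneg fun j _ => by positivity

lemma load_update (s : Fin n → Finset (Fin m)) (i : Fin n) (si' : Finset (Fin m)) (r : Fin m) :
    load (Function.update s i si') r + (if r ∈ s i then 1 else 0)
      = load s r + (if r ∈ si' then 1 else 0) := by
  classical
  have key : ∀ t : Fin n → Finset (Fin m),
      load t r = ((Finset.univ.erase i).filter (fun j => r ∈ t j)).card
        + (if r ∈ t i then 1 else 0) := by
    intro t
    unfold load
    rw [← Finset.insert_erase (Finset.mem_univ i), Finset.filter_insert]
    split
    · rw [Finset.card_insert_of_notMem (by simp)]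
      simp_all
    · simp_all
  rw [key, key]
  have h2 : ((Finset.univ.erase i).filter (fun j => r ∈ Function.update s i si' j))
      = ((Finset.univ.erase i).filter (fun j => r ∈ s j)) := by
    apply Finset.filter_congr
    intro j hj
    simp [Function.update_of_ne (Finset.ne_of_mem_erase hj)]
  rw [h2, Function.update_self]
  omega

lemma potential_sub (cost : Fin m → ℕ → ℝ) (s : Fin n → Finset (Fin m)) (i : Fin n)
    (si' : Finset (Fin m)) :
    potential cost s - potential cost (Function.update s i si')
      = playerCost cost s i - playerCost cost (Function.update s i si') i := by
  classical
  set s' := Function.update s i si' with hs'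
  have hPC : ∀ (t : Fin n → Finset (Fin m)) (u : Finset (Fin m)),
      (∑ r ∈ u, cost r (load t r)) = ∑ r : Fin m, (if r ∈ u then cost r (load t r) else 0) := by
    intro t u
    rw [Finset.sum_ite_mem, Finset.univ_inter]
  have hsi : s' i = si' := Function.update_self i si' s
  unfold playerCost potential
  rw [hsi, hPC, hPC, ← Finset.sum_sub_distrib, ← Finset.sum_sub_distrib]
  apply Finset.sum_congr rfl
  intro r _
  have hload := load_update s i si' r
  by_cases h1 : r ∈ s i <;> by_cases h2 : r ∈ si' <;> simp only [h1, h2, if_true, if_false]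
  · have : load s' r = load s r := by simpa [h1, h2] using hload
    rw [this]; ring
  · have hl : load s r = load s' r + 1 := by simpa [h1, h2] using hload.symm
    rw [hl, Finset.sum_Icc_succ_top (Nat.le_add_left 1 _)]
    ring
  · have hl : load s' r = load s r + 1 := by simpa [h1, h2] using hload
    rw [hl, Finset.sum_Icc_succ_top (Nat.le_add_left 1 _)]
    ring
  · have : load s' r = load s r := by simpa [h1, h2] using hload
    rw [this]; ring

lemma potential_nonneg {a : Fin m → ℝ} (ha : ∀ r, 0 ≤ a r) (s : Fin n → Finset (Fin m)) :
    0 ≤ potential (shareCost a) s := by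
  unfold potential shareCost
  exact Finset.sum_nonneg fun r _ => Finset.sum_nonneg fun j _ =>
    div_nonneg (ha r) (Nat.cast_nonneg j)

lemma potential_le {a : Fin m → ℝ} (ha : ∀ r, 0 ≤ a r) (ha1 : ∀ r, a r ≤ 1)
    (s : Fin n → Finset (Fin m)) :
    potential (shareCost a) s ≤ m * harmonicNumber n := by
  unfold potential shareCost harmonicNumber
  calc ∑ r : Fin m, ∑ j ∈ Finset.Icc 1 (load s r), a r / (j : ℝ)
      ≤ ∑ _r : Fin m, ∑ j ∈ Finset.Icc 1 n, (1 : ℝ) / j := by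
        apply Finset.sum_le_sum
        intro r _
        calc ∑ j ∈ Finset.Icc 1 (load s r), a r / (j : ℝ)
            ≤ ∑ j ∈ Finset.Icc 1 (load s r), (1 : ℝ) / j := by
              apply Finset.sum_le_sum
              intro j hj
              have hj1 : (0 : ℝ) < j := by
                exact_mod_cast Nat.lt_of_lt_of_le Nat.zero_lt_one (Finset.mem_Icc.mp hj).1
              exact (div_le_div_iff_of_pos_right hj1).mpr (ha1 r)
          _ ≤ ∑ j ∈ Finset.Icc 1 n, (1 : ℝ) / j :=
              Finset.sum_le_sum_of_subset_of_nonneg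
                (Finset.Icc_subset_Icc_right (load_le_n s r))
                (fun j _ _ => by positivity)
    _ = m * ∑ j ∈ Finset.Icc 1 n, (1 : ℝ) / j := by
        rw [Finset.sum_const, Finset.card_univ, Fintype.card_fin, nsmul_eq_mul]

lemma playerCost_nonneg {a : Fin m → ℝ} (ha : ∀ r, 0 ≤ a r) (s : Fin n → Finset (Fin m))
    (i : Fin n) : 0 ≤ playerCost (shareCost a) s i := by
  unfold playerCost shareCost
  exact Finset.sum_nonneg fun r _ => div_nonneg (ha r) (Nat.cast_nonneg _)

lemma playerCost_ge {a : Fin m → ℝ} (ha : ∀ r, 0 ≤ a r) (hn : 0 < n)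
    {s : Fin n → Finset (Fin m)} {i : Fin n} {r0 : Fin m} (hr0 : r0 ∈ s i) :
    a r0 / n ≤ playerCost (shareCost a) s i := by
  unfold playerCost shareCost
  have hl1 : 0 < load s r0 := one_le_load hr0
  have h1 : a r0 / (n : ℝ) ≤ a r0 / (load s r0 : ℝ) := by
    gcongr
    · exact ha r0
    · exact_mod_cast load_le_n s r0
  exact h1.trans (Finset.single_le_sum
    (fun r _ => div_nonneg (ha r) (Nat.cast_nonneg _)) hr0)

lemma improve_decrease {strat : Fin n → Set (Finset (Fin m))} {a : Fin m → ℝ}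
    (ha : ∀ r, 0 ≤ a r) (hn : 0 < n)
    (hne : ∀ i, ∀ u ∈ strat i, u.Nonempty)
    {ε : ℝ} (hε : 0 < ε) {s s' : Fin n → Finset (Fin m)}
    (hv : ValidProfile strat s)
    (him : ImprovingMove strat (shareCost a) ε s s') (r0 : Fin m) (hr0min : ∀ r, a r0 ≤ a r) :
    potential (shareCost a) s' < potential (shareCost a) s ∧
    ε / (1 + ε) * (a r0 / n) ≤ potential (shareCost a) s - potential (shareCost a) s' := by
  obtain ⟨i, si', hsi', rfl, hlt⟩ := him
  have hdiff := potential_sub (shareCost a) s i si'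
  set C := playerCost (shareCost a) s i with hC
  set C' := playerCost (shareCost a) (Function.update s i si') i with hC'
  have hC'0 : 0 ≤ C' := playerCost_nonneg ha _ i
  have h1ε : (0:ℝ) < 1 + ε := by linarith
  have hnR : (0:ℝ) < n := by exact_mod_cast hn
  obtain ⟨r1, hr1⟩ := hne i (s i) (hv i)
  have hmin : a r0 / n ≤ a r1 / n := by gcongr; exact hr0min r1
  have hCge : a r0 / n ≤ C := hmin.trans (playerCost_ge ha hn hr1)
  have h2 : C' < C / (1 + ε) := by rw [lt_div_iff₀ h1ε]; linarith
  constructor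
  · have : 0 < C - C' := by nlinarith
    linarith [hdiff]
  · have h4 : ε / (1 + ε) * (a r0 / n) ≤ ε / (1 + ε) * C :=
      mul_le_mul_of_nonneg_left hCge (by positivity)
    have h5 : ε / (1 + ε) * C = C - C / (1 + ε) := by field_simp; ring
    linarith [hdiff]

lemma pot_strict_chain {strat : Fin n → Set (Finset (Fin m))} {a : Fin m → ℝ}
    (ha : ∀ r, 0 ≤ a r) (hn : 0 < n) (hne : ∀ i, ∀ u ∈ strat i, u.Nonempty)
    {ε : ℝ} (hε : 0 < ε) (r0 : Fin m) (hr0min : ∀ r, a r0 ≤ a r)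
    {t : ℕ} {s : ℕ → Fin n → Finset (Fin m)}
    (hval : ∀ k ≤ t, ValidProfile strat (s k))
    (himp : ∀ k < t, ImprovingMove strat (shareCost a) ε (s k) (s (k + 1))) :
    ∀ l ≤ t, ∀ k < l, potential (shareCost a) (s l) < potential (shareCost a) (s k) := by
  intro l
  induction l with
  | zero => omega
  | succ l ih =>
    intro hl k hk
    have hstep : potential (shareCost a) (s (l + 1)) < potential (shareCost a) (s l) :=
      (improve_decrease ha hn hne hε (hval l (by omega)) (himp l (by omega)) r0 hr0min).1
    rcases Nat.lt_or_ge k l with h | h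
    · exact hstep.trans (ih (by omega) k h)
    · have : k = l := by omega
      subst this; exact hstep

lemma seq_len_bound {strat : Fin n → Set (Finset (Fin m))} {a : Fin m → ℝ}
    (ha : ∀ r, 0 ≤ a r) (ha1 : ∀ r, a r ≤ 1) (hn : 0 < n)
    (hne : ∀ i, ∀ u ∈ strat i, u.Nonempty)
    {ε : ℝ} (hε : 0 < ε) (r0 : Fin m) (hr0min : ∀ r, a r0 ≤ a r)
    {t : ℕ} {s : ℕ → Fin n → Finset (Fin m)}
    (hval : ∀ k ≤ t, ValidProfile strat (s k))
    (himp : ∀ k < t, ImprovingMove strat (shareCost a) ε (s k) (s (k + 1))) :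
    (t : ℝ) * (ε / (1 + ε) * (a r0 / n)) ≤ m * harmonicNumber n ∧ t + 1 ≤ (n + 1) ^ m := by
  constructor
  · have htel : ∑ k ∈ Finset.range t,
        (potential (shareCost a) (s k) - potential (shareCost a) (s (k + 1)))
        = potential (shareCost a) (s 0) - potential (shareCost a) (s t) :=
      Finset.sum_range_sub' (fun k => potential (shareCost a) (s k)) t
    have hterm : ∀ k ∈ Finset.range t,
        ε / (1 + ε) * (a r0 / n) ≤
          potential (shareCost a) (s k) - potential (shareCost a) (s (k + 1)) := by
      intro k hk
      have hk' := Finset.mem_range.mp hk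
      exact (improve_decrease ha hn hne hε (hval k (by omega)) (himp k hk') r0 hr0min).2
    have hsum := Finset.card_nsmul_le_sum (Finset.range t) _ _ hterm
    rw [Finset.card_range, nsmul_eq_mul] at hsum
    have h0 := potential_le ha ha1 (s 0)
    have ht0 := potential_nonneg ha (s t)
    linarith [htel ▸ hsum]
  · have hinj : Function.Injective
        (fun (k : Fin (t + 1)) => fun r => (⟨load (s k) r, Nat.lt_succ_of_le (load_le_n _ r)⟩
          : Fin (n + 1))) := by
      intro k l h
      by_contra hkl
      have hload : ∀ r, load (s (k : ℕ)) r = load (s (l : ℕ)) r := by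
        intro r
        have := congr_fun h r
        simpa [Fin.mk.injEq] using this
      have hpot : potential (shareCost a) (s (k : ℕ)) = potential (shareCost a) (s (l : ℕ)) := by
        unfold potential
        exact Finset.sum_congr rfl fun r _ => by rw [hload r]
      rcases lt_trichotomy k l with hlt | heq | hlt
      · have := pot_strict_chain ha hn hne hε r0 hr0min hval himp (l : ℕ) (Fin.is_le l)
          (k : ℕ) (Fin.lt_def.mp hlt)
        linarith
      · exact hkl heq
      · have := pot_strict_chain ha hn hne hε r0 hr0min hval himp (k : ℕ) (Fin.is_le k)
          (l : ℕ) (Fin.lt_def.mp hlt)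
        linarith
    have := Fintype.card_le_of_injective _ hinj
    simpa [Fintype.card_fun, Fintype.card_fin] using this

lemma det_bound {strat : Fin n → Set (Finset (Fin m))}
    (hstrat : ∀ i, (strat i).Nonempty) (hne : ∀ i, ∀ u ∈ strat i, u.Nonempty)
    {a : Fin m → ℝ} (ha : ∀ r, 0 ≤ a r) (ha1 : ∀ r, a r ≤ 1)
    (hn : 0 < n) (hm : 2 ≤ m) {ε : ℝ} (hε : 0 < ε) :
    maxImprovingSeqLen strat (shareCost a) ε ≤ (n + 1) ^ m - 1 ∧
    ∀ t : ℕ, 1 ≤ t → t ≤ maxImprovingSeqLen strat (shareCost a) ε →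
      ∃ r, a r ≤ (1 + 1 / ε) * n * (m * harmonicNumber n) / t := by
  classical
  have hmne : (Finset.univ : Finset (Fin m)).Nonempty := by
    have : Nonempty (Fin m) := ⟨⟨0, by omega⟩⟩
    exact Finset.univ_nonempty
  obtain ⟨r0, _, hr0eq⟩ := Finset.exists_mem_eq_inf' hmne a
  have hr0min : ∀ r, a r0 ≤ a r := fun r => by
    rw [← hr0eq]; exact Finset.inf'_le a (Finset.mem_univ r)
  set S : Set ℕ := {T : ℕ | ∃ s : ℕ → Fin n → Finset (Fin m),
    (∀ k ≤ T, ValidProfile strat (s k)) ∧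
    ∀ k < T, ImprovingMove strat (shareCost a) ε (s k) (s (k + 1))} with hSdef
  have hsup : maxImprovingSeqLen strat (shareCost a) ε = sSup S := rfl
  have h0 : 0 ∈ S := by
    refine ⟨fun _ i => (hstrat i).some, fun k _ i => (hstrat i).some_mem, fun k hk => by omega⟩
  have hub : ∀ T ∈ S, T ≤ (n + 1) ^ m - 1 := by
    intro T hT
    obtain ⟨s, hval, himp⟩ := hT
    have := (seq_len_bound ha ha1 hn hne hε r0 hr0min hval himp).2
    omega
  have hmem : sSup S ∈ S := Nat.sSup_mem ⟨0, h0⟩ ⟨(n + 1) ^ m - 1, hub⟩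
  refine ⟨hsup ▸ hub _ hmem, ?_⟩
  intro t ht1 ht
  rw [hsup] at ht
  obtain ⟨s, hval, himp⟩ := hmem
  have hval' : ∀ k ≤ t, ValidProfile strat (s k) := fun k hk => hval k (hk.trans ht)
  have himp' : ∀ k < t, ImprovingMove strat (shareCost a) ε (s k) (s (k + 1)) :=
    fun k hk => himp k (lt_of_lt_of_le hk ht)
  have h := (seq_len_bound ha ha1 hn hne hε r0 hr0min hval' himp').1
  refine ⟨r0, ?_⟩
  have h1ε : (0:ℝ) < 1 + ε := by linarith
  have hnR : (0:ℝ) < n := by exact_mod_cast hn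
  have htR : (0:ℝ) < t := by exact_mod_cast ht1
  rw [le_div_iff₀ htR]
  have hcoef : (0:ℝ) < (1 + ε) / ε * n := by positivity
  have h2 := mul_le_mul_of_nonneg_left h hcoef.le
  have heps : (1:ℝ) + 1 / ε = (1 + ε) / ε := by
    rw [eq_div_iff hε.ne', add_mul, one_mul, one_div, inv_mul_cancel₀ hε.ne']; ring
  have heq : (1 + 1 / ε) * (n : ℝ) * (m * harmonicNumber n)
      = (1 + ε) / ε * n * (m * harmonicNumber n) := by rw [heps]
  rw [heq]
  calc a r0 * t = (1 + ε) / ε * n * ((t : ℝ) * (ε / (1 + ε) * (a r0 / n))) := by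
        field_simp
    _ ≤ (1 + ε) / ε * n * (m * harmonicNumber n) := h2

end AuxLemmas

section ProbLemmas
variable {Ω : Type*} [MeasurableSpace Ω] {P : Measure Ω} {φ : ℝ} {X : Ω → ℝ}

lemma smooth_cdf (hs : PhiSmooth P φ X) (hφ : 0 ≤ φ) (x : ℝ) :
    P {ω | X ω ≤ x} ≤ ENNReal.ofReal (φ * x) := by
  obtain ⟨hX, f, hmap, hfle, hf0⟩ := hs
  have h1 : P {ω | X ω ≤ x} = (Measure.map X P) (Set.Iic x) := by
    rw [Measure.map_apply hX measurableSet_Iic]; rfl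
  rw [h1, hmap, withDensity_apply _ measurableSet_Iic]
  have hg : f ≤ (Set.Icc (0:ℝ) 1).indicator (fun _ => ENNReal.ofReal φ) := by
    intro y
    by_cases hy : y ∈ Set.Icc (0:ℝ) 1
    · rw [Set.indicator_of_mem hy]; exact hfle y
    · rw [Set.indicator_of_notMem hy, hf0 y hy]
  calc ∫⁻ y in Set.Iic x, f y ≤ ∫⁻ y in Set.Iic x,
        (Set.Icc (0:ℝ) 1).indicator (fun _ => ENNReal.ofReal φ) y :=
        lintegral_mono hg
    _ = ENNReal.ofReal φ * (volume.restrict (Set.Iic x)) (Set.Icc 0 1) := by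
        rw [lintegral_indicator measurableSet_Icc]
        simp [Measure.restrict_apply measurableSet_Icc]
    _ ≤ ENNReal.ofReal φ * ENNReal.ofReal x := by
        gcongr
        rw [Measure.restrict_apply measurableSet_Icc]
        calc volume (Set.Icc (0:ℝ) 1 ∩ Set.Iic x) ≤ volume (Set.Icc 0 x) := by
              apply measure_mono
              rintro y ⟨⟨hy1, _⟩, hy2⟩
              exact ⟨hy1, hy2⟩
          _ = ENNReal.ofReal x := by rw [Real.volume_Icc]; simp
    _ = ENNReal.ofReal (φ * x) := (ENNReal.ofReal_mul hφ).symm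

lemma smooth_range (hs : PhiSmooth P φ X) : ∀ᵐ ω ∂P, X ω ∈ Set.Icc (0:ℝ) 1 := by
  obtain ⟨hX, f, hmap, hfle, hf0⟩ := hs
  have h1 : P {ω | X ω ∉ Set.Icc (0:ℝ) 1} = (Measure.map X P) (Set.Icc (0:ℝ) 1)ᶜ := by
    rw [Measure.map_apply hX measurableSet_Icc.compl]; rfl
  have h2 : (Measure.map X P) (Set.Icc (0:ℝ) 1)ᶜ = 0 := by
    rw [hmap, withDensity_apply _ measurableSet_Icc.compl]
    have hind : f = (Set.Icc (0:ℝ) 1).indicator f := by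
      funext y
      by_cases hy : y ∈ Set.Icc (0:ℝ) 1
      · rw [Set.indicator_of_mem hy]
      · rw [Set.indicator_of_notMem hy, hf0 y hy]
    rw [hind, lintegral_indicator measurableSet_Icc]
    rw [Measure.restrict_restrict measurableSet_Icc]
    simp
  rw [ae_iff]
  exact h1.trans h2

end ProbLemmas

lemma sum_inv_le_log (M : ℕ) (hM : 1 ≤ M) :
    ∑ t ∈ Finset.Icc 2 M, (1 : ℝ) / t ≤ Real.log M := by
  induction M with
  | zero => omega
  | succ M ih =>
    rcases Nat.eq_or_lt_of_le hM with h1 | h1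
    · simp [← h1]
    · have hM1 : 1 ≤ M := by omega
      have hMR : (0:ℝ) < M := by exact_mod_cast hM1
      rw [Finset.sum_Icc_succ_top (by omega : 2 ≤ M + 1)]
      have hstep : (1:ℝ) / (M + 1) ≤ Real.log (M + 1) - Real.log M := by
        have h3 : Real.log ((M : ℝ) / (M + 1)) ≤ (M : ℝ) / (M + 1) - 1 :=
          Real.log_le_sub_one_of_pos (by positivity)
        rw [Real.log_div hMR.ne' (by positivity)] at h3
        have h4 : (M : ℝ) / (M + 1) - 1 = -(1 / (M + 1)) := by field_simp; ring
        linarith [h3, h4 ▸ h3]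
      have := ih hM1
      push_cast
      push_cast at this hstep
      linarith

/-- in a `φ`-smooth fair cost-sharing game with `n` players and `m ≥ 2`
resources (the fixed resource costs `a_r` being independent `φ`-smooth random variables),
for any `ε > 0` the expected length `E[T]` of the longest sequence of consecutive
`(1+ε)`-improving moves satisfies
`E[T] ≤ φ·(1 + 1/ε)·n·m²·H_n·(m·ln(n+1) + ln m) + 1`. -/
theorem smoothed_cost_sharing_brd_bound
    {Ω : Type*} [MeasurableSpace Ω] (P : Measure Ω) [IsProbabilityMeasure P]
    {n m : ℕ} (hn : 0 < n) (hm : 2 ≤ m)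
    (φ : ℝ) (hφ : 1 ≤ φ)
    (strat : Fin n → Set (Finset (Fin m)))
    (hstrat : ∀ i, (strat i).Nonempty)
    (hstrat' : ∀ i, ∀ t ∈ strat i, t.Nonempty)
    (c : Fin m → Ω → ℝ)
    (hsmooth : ∀ r, PhiSmooth P φ (c r))
    (hindep : iIndepFun c P)
    (ε : ℝ) (hε : 0 < ε) :
    ∫⁻ ω, (maxImprovingSeqLen strat (shareCost fun r => c r ω) ε : ENNReal) ∂P
      ≤ ENNReal.ofReal
          (φ * (1 + 1 / ε) * n * m ^ 2 * harmonicNumber n *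
              (m * Real.log (n + 1) + Real.log m) + 1) := by
  classical
  have hφ0 : (0:ℝ) ≤ φ := by linarith
  have hH0 : 0 ≤ harmonicNumber n := harmonic_nonneg n
  have hnR : (0:ℝ) < n := by exact_mod_cast hn
  have hmR : (2:ℝ) ≤ m := by exact_mod_cast hm
  set C : ℝ := (1 + 1 / ε) * n * (m * harmonicNumber n) with hCdef
  have hC0 : 0 ≤ C := by
    apply mul_nonneg (mul_nonneg (by positivity) hnR.le)
    exact mul_nonneg (by positivity) hH0
  set M : ℕ := (n + 1) ^ m - 1 with hMdef
  have hNM : 4 ≤ (n + 1) ^ m := by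
    calc (4:ℕ) = 2 ^ 2 := by norm_num
      _ ≤ 2 ^ m := Nat.pow_le_pow_right (by norm_num) hm
      _ ≤ (n + 1) ^ m := Nat.pow_le_pow_left (by omega) m
  have hM1 : 1 ≤ M := by omega
  set B : ℕ → Set Ω := fun t => ⋃ r, {ω | c r ω ≤ C / t} with hBdef
  have hBmeas : ∀ t, MeasurableSet (B t) :=
    fun t => MeasurableSet.iUnion (fun r => (hsmooth r).1 measurableSet_Iic)
  have hae : ∀ᵐ ω ∂P, ∀ r, c r ω ∈ Set.Icc (0:ℝ) 1 :=
    (ae_all_iff).mpr (fun r => smooth_range (hsmooth r))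
  have hpt : ∀ᵐ ω ∂P, (maxImprovingSeqLen strat (shareCost fun r => c r ω) ε : ENNReal)
      ≤ ∑ t ∈ Finset.Icc 1 M, (B t).indicator (fun _ => (1:ENNReal)) ω := by
    filter_upwards [hae] with ω hω
    obtain ⟨hTle, hTt⟩ := det_bound hstrat hstrat' (fun r => (hω r).1) (fun r => (hω r).2)
      hn hm hε (ε := ε)
    set T := maxImprovingSeqLen strat (shareCost fun r => c r ω) ε with hTdef
    calc (T : ENNReal) = ∑ _t ∈ Finset.Icc 1 T, (1:ENNReal) := by
          rw [Finset.sum_const, Nat.card_Icc]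
          simp
      _ ≤ ∑ t ∈ Finset.Icc 1 T, (B t).indicator (fun _ => (1:ENNReal)) ω := by
          apply Finset.sum_le_sum
          intro t htmem
          obtain ⟨ht1, htT⟩ := Finset.mem_Icc.mp htmem
          obtain ⟨r, hr⟩ := hTt t ht1 htT
          have hmem : ω ∈ B t := Set.mem_iUnion.mpr ⟨r, hr⟩
          rw [Set.indicator_of_mem hmem]
      _ ≤ ∑ t ∈ Finset.Icc 1 M, (B t).indicator (fun _ => (1:ENNReal)) ω :=
          Finset.sum_le_sum_of_subset (Finset.Icc_subset_Icc_right hTle)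
  have hPBt : ∀ t : ℕ, P (B t) ≤ ENNReal.ofReal ((m : ℝ) * (φ * (C / t))) := by
    intro t
    calc P (B t) ≤ ∑ r : Fin m, P {ω | c r ω ≤ C / t} := measure_iUnion_fintype_le _ _
      _ ≤ ∑ _r : Fin m, ENNReal.ofReal (φ * (C / t)) :=
          Finset.sum_le_sum (fun r _ => smooth_cdf (hsmooth r) hφ0 (C / t))
      _ = (m : ENNReal) * ENNReal.ofReal (φ * (C / t)) := by
          rw [Finset.sum_const, Finset.card_univ, Fintype.card_fin, nsmul_eq_mul]
      _ = ENNReal.ofReal ((m : ℝ) * (φ * (C / t))) := by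
          rw [← ENNReal.ofReal_natCast m, ← ENNReal.ofReal_mul (Nat.cast_nonneg m)]
  have hsplit : Finset.Icc 1 M = insert 1 (Finset.Icc 2 M) := by
    ext x
    simp only [Finset.mem_Icc, Finset.mem_insert]
    omega
  have hlogm : 0 ≤ Real.log m := Real.log_nonneg (by linarith)
  set K : ℝ := φ * (1 + 1 / ε) * n * m ^ 2 * harmonicNumber n with hKdef
  have hK0 : 0 ≤ K := by
    apply mul_nonneg _ hH0
    positivity
  have hreal : ∑ t ∈ Finset.Icc 2 M, (m : ℝ) * (φ * (C / t)) ≤ K * (m * Real.log (n + 1)) := by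
    have hrw : ∀ t ∈ Finset.Icc 2 M, (m : ℝ) * (φ * (C / t)) = (m * φ * C) * (1 / t) := by
      intro t _
      rw [div_eq_mul_one_div C (t:ℝ)]
      ring
    rw [Finset.sum_congr rfl hrw, ← Finset.mul_sum]
    have hlog1 : Real.log M ≤ m * Real.log (n + 1) := by
      have hc1 : (M : ℝ) ≤ ((n + 1 : ℕ) : ℝ) ^ m := by
        have : (M : ℝ) ≤ (((n + 1) ^ m : ℕ) : ℝ) := by
          exact_mod_cast Nat.sub_le _ _
        simpa [Nat.cast_pow] using this
      have hMR : (0:ℝ) < M := by exact_mod_cast hM1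
      calc Real.log M ≤ Real.log (((n + 1 : ℕ) : ℝ) ^ m) := Real.log_le_log hMR hc1
        _ = m * Real.log ((n + 1 : ℕ) : ℝ) := by rw [Real.log_pow]
        _ = m * Real.log ((n : ℝ) + 1) := by norm_num
    have hmφC : (0:ℝ) ≤ m * φ * C := by positivity
    calc (m : ℝ) * φ * C * ∑ t ∈ Finset.Icc 2 M, (1:ℝ) / t
        ≤ m * φ * C * Real.log M := by
          exact mul_le_mul_of_nonneg_left (sum_inv_le_log M hM1) hmφC
      _ ≤ m * φ * C * (m * Real.log (n + 1)) := by
          apply mul_le_mul_of_nonneg_left hlog1 hmφC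
      _ = K * (m * Real.log (n + 1)) := by rw [hKdef, hCdef]; ring
  calc ∫⁻ ω, (maxImprovingSeqLen strat (shareCost fun r => c r ω) ε : ENNReal) ∂P
      ≤ ∫⁻ ω, ∑ t ∈ Finset.Icc 1 M, (B t).indicator (fun _ => (1:ENNReal)) ω ∂P :=
        lintegral_mono_ae hpt
    _ = ∑ t ∈ Finset.Icc 1 M, P (B t) := by
        rw [lintegral_finset_sum _ (fun t _ => (measurable_const.indicator (hBmeas t)))]
        apply Finset.sum_congr rfl
        intro t _
        rw [lintegral_indicator (hBmeas t)]
        simp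
    _ = P (B 1) + ∑ t ∈ Finset.Icc 2 M, P (B t) := by
        rw [hsplit, Finset.sum_insert (by simp)]
    _ ≤ 1 + ENNReal.ofReal (K * (m * Real.log (n + 1))) := by
        gcongr
        · exact prob_le_one
        · calc ∑ t ∈ Finset.Icc 2 M, P (B t)
              ≤ ∑ t ∈ Finset.Icc 2 M, ENNReal.ofReal ((m : ℝ) * (φ * (C / t))) :=
                Finset.sum_le_sum (fun t _ => hPBt t)
            _ = ENNReal.ofReal (∑ t ∈ Finset.Icc 2 M, (m : ℝ) * (φ * (C / t))) := by
                rw [ENNReal.ofReal_sum_of_nonneg]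
                intro t ht
                have ht2 := (Finset.mem_Icc.mp ht).1
                have : (0:ℝ) < t := by exact_mod_cast by omega
                positivity
            _ ≤ ENNReal.ofReal (K * (m * Real.log (n + 1))) :=
                ENNReal.ofReal_le_ofReal hreal
    _ ≤ ENNReal.ofReal
          (φ * (1 + 1 / ε) * n * m ^ 2 * harmonicNumber n *
              (m * Real.log (n + 1) + Real.log m) + 1) := by
        have h1 : (0:ℝ) ≤ K * (m * Real.log (n + 1)) := by
          apply mul_nonneg hK0
          apply mul_nonneg (by positivity)
          exact Real.log_nonneg (by linarith)
        have h2 : K * ((m : ℝ) * Real.log ((n : ℝ) + 1)) + 1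
            ≤ K * ((m : ℝ) * Real.log ((n : ℝ) + 1) + Real.log (m : ℝ)) + 1 := by
          nlinarith [mul_nonneg hK0 hlogm]
        rw [add_comm (1:ENNReal), ← ENNReal.ofReal_one,
          ← ENNReal.ofReal_add h1 zero_le_one]
        refine ENNReal.ofReal_le_ofReal (h2.trans (le_of_eq ?_))
        rw [hKdef]
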